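/- (Critical cones as tangential approximations) Let Q ⊂ ℝⁿ be Clarke regular at a point x̄ and let M be a locally minimal identifiable set (relative to Q) at x̄ for v̄ ∈ N_Q(x̄). Suppose additionally that M is prox-regular at x̄ for v̄ and smoothly derivable at x̄. Then the closed convex hull of the tangent cone T_M(x̄) equals the critical cone K_Q(x̄, v̄) := N_{N_Q(x̄)}(v̄). -/

import Mathlib

open Filter Topology Metric Set
open scoped RealInnerProductSpace

noncomputable section

/-- `ℝⁿ` with the Euclidean structure. -/
abbrev Euc (n : ℕ) : Type := EuclideanSpace ℝ (Fin n)

section Defs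

variable {H : Type*} [NormedAddCommGroup H] [InnerProductSpace ℝ H]
variable {H' : Type*} [NormedAddCommGroup H'] [InnerProductSpace ℝ H']

/-- The inclusion `M ⊆ Q` holds locally around the point `x`. -/
def LocallyIncl {α : Type*} [TopologicalSpace α] (M Q : Set α) (x : α) : Prop :=
  ∃ U ∈ 𝓝 x, M ∩ U ⊆ Q ∩ U

/-- The equality `M = Q` holds locally around the point `x`. -/
def LocallyEq {α : Type*} [TopologicalSpace α] (M Q : Set α) (x : α) : Prop :=
  ∃ U ∈ 𝓝 x, M ∩ U = Q ∩ U

/-- The graph of a set-valued mapping. -/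
def svGraph (G : H → Set H') : Set (H × H') := {p | p.2 ∈ G p.1}

/-- `G⁻¹(W)`, the preimage of a set `W` under the set-valued mapping `G`. -/
def svPreimage (G : H → Set H') (W : Set H') : Set H := {x | (G x ∩ W).Nonempty}

/-- `M` is identifiable relative to the set-valued mapping `G` at `x` for `v ∈ G x`:
the inclusion `gph G ⊆ M × H'` holds locally around `(x, v)`. -/
def IdentifiableRel (G : H → Set H') (M : Set H) (x : H) (v : H') : Prop :=
  LocallyIncl (svGraph G) (M ×ˢ (univ : Set H')) (x, v)

/-- `M` is necessary relative to `G` at `x` for `v ∈ G x`: `x ∈ M` and the function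
`y ↦ d(v, G y)`, restricted to `M`, is continuous at `x`. -/
def NecessaryRel (G : H → Set H') (M : Set H) (x : H) (v : H') : Prop :=
  x ∈ M ∧ ContinuousWithinAt (fun y => EMetric.infEdist v (G y)) M x

/-- `M` is a locally minimal identifiable set relative to `G` at `x` for `v`. -/
def LocallyMinimalIdentifiableRel (G : H → Set H') (M : Set H) (x : H) (v : H') : Prop :=
  IdentifiableRel G M x v ∧ ∀ M' : Set H, IdentifiableRel G M' x v → LocallyIncl M M' x

/-- `M` is a locally maximal necessary set relative to `G` at `x` for `v`. -/
def LocallyMaximalNecessaryRel (G : H → Set H') (M : Set H) (x : H) (v : H') : Prop :=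
  NecessaryRel G M x v ∧ ∀ M' : Set H, NecessaryRel G M' x v → LocallyIncl M' M x

/-- The proximal normal cone to `Q` at `x`. -/
def proxNormalCone (Q : Set H) (x : H) : Set H :=
  {v | x ∈ Q ∧ ∃ r > (0:ℝ), ∀ y ∈ Q, dist (x + r⁻¹ • v) x ≤ dist (x + r⁻¹ • v) y}

/-- The Fréchet normal cone to `Q` at `x`. -/
def frechetNormalCone (Q : Set H) (x : H) : Set H :=
  {v | x ∈ Q ∧ ∀ ε > (0:ℝ), ∃ δ > (0:ℝ), ∀ y ∈ Q, dist y x < δ → ⟪v, y - x⟫ ≤ ε * ‖y - x‖}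

/-- The limiting normal cone to `Q` at `x`. -/
def limitingNormalCone (Q : Set H) (x : H) : Set H :=
  {v | ∃ xs vs : ℕ → H, (∀ i, vs i ∈ frechetNormalCone Q (xs i)) ∧
        Tendsto xs atTop (𝓝 x) ∧ Tendsto vs atTop (𝓝 v)}

/-- `Q` is locally closed at `x`. -/
def LocallyClosedAt (Q : Set H) (x : H) : Prop :=
  ∃ ε > (0:ℝ), IsClosed (Q ∩ closedBall x ε)

/-- `x` is the unique nearest point of `S` to `p`. -/
def IsUniqueNearestPt (S : Set H) (p x : H) : Prop :=
  x ∈ S ∧ ∀ y ∈ S, y ≠ x → dist p x < dist p y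

/-- `Q` is prox-regular at `xb` for `vb`. -/
def ProxRegularAt (Q : Set H) (xb vb : H) : Prop :=
  LocallyClosedAt Q xb ∧ ∃ ε > (0:ℝ), ∃ r > (0:ℝ), ∀ x ∈ Q,
    ∀ v ∈ limitingNormalCone Q x, dist x xb < ε → dist v vb < ε →
      IsUniqueNearestPt (Q ∩ closedBall xb ε) (x + r⁻¹ • v) x

/-- `Q` is Clarke regular at `x`. -/
def ClarkeRegularAt (Q : Set H) (x : H) : Prop :=
  LocallyClosedAt Q x ∧ limitingNormalCone Q x = frechetNormalCone Q x

/-- `M` is identifiable relative to the set `Q` at `xb` for `vb ∈ N_Q(xb)`: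
the graph of the limiting normal cone mapping is contained in `M × H` locally
around `(xb, vb)`. -/
def IdentifiableIn (Q M : Set H) (xb vb : H) : Prop :=
  ∃ W ∈ 𝓝 (xb, vb), ∀ p : H × H, p ∈ W → p.1 ∈ Q → p.2 ∈ limitingNormalCone Q p.1 → p.1 ∈ M

/-- `M` is a locally minimal identifiable set relative to the set `Q` at `xb` for `vb`. -/
def LocallyMinimalIdentifiableIn (Q M : Set H) (xb vb : H) : Prop :=
  IdentifiableIn Q M xb vb ∧ ∀ M' : Set H, IdentifiableIn Q M' xb vb → LocallyIncl M M' xb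

/-- The (Bouligand) tangent cone to `Q` at `xb`. -/
def tangentConeB (Q : Set H) (xb : H) : Set H :=
  {w | ∃ (xs : ℕ → H) (ts : ℕ → ℝ), (∀ i, xs i ∈ Q) ∧ (∀ i, 0 < ts i) ∧
      Tendsto ts atTop (𝓝 0) ∧ Tendsto xs atTop (𝓝 xb) ∧
      Tendsto (fun i => (ts i)⁻¹ • (xs i - xb)) atTop (𝓝 w)}

/-- The set of nearest points of `Q` to `y`. -/
def nearestPts (Q : Set H) (y : H) : Set H := {z | z ∈ Q ∧ ∀ w ∈ Q, dist y z ≤ dist y w}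

/-- A tangent vector `w ∈ T_Q(xb)` is smoothly derivable. -/
def SmoothlyDerivableVec (Q : Set H) (xb w : H) : Prop :=
  ∃ ε > (0:ℝ), ∃ γ : ℝ → H, ContDiffOn ℝ 1 γ (Ico (0:ℝ) ε) ∧ γ 0 = xb ∧
    (∀ t ∈ Ico (0:ℝ) ε, γ t ∈ Q) ∧
    Tendsto (fun t => t⁻¹ • (γ t - xb)) (𝓝[>] (0:ℝ)) (𝓝 w)

/-- `Q` is smoothly derivable at `xb`: every tangent vector is smoothly derivable. -/
def SmoothlyDerivableAt (Q : Set H) (xb : H) : Prop :=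
  ∀ w ∈ tangentConeB Q xb, SmoothlyDerivableVec Q xb w

/-- The normal cone of convex analysis. -/
def convNormalCone (C : Set H) (x : H) : Set H := {v | ∀ y ∈ C, ⟪v, y - x⟫ ≤ 0}

/-- The tangent cone of convex analysis. -/
def convTangentCone (C : Set H) (x : H) : Set H :=
  closure {w | ∃ l : ℝ, 0 ≤ l ∧ ∃ y ∈ C, w = l • (y - x)}

/-- A convex polyhedron: a finite intersection of closed halfspaces. -/
def IsPolyhedron (Q : Set H) : Prop :=
  ∃ (k : ℕ) (a : Fin k → H) (b : Fin k → ℝ), Q = {x | ∀ i, ⟪a i, x⟫ ≤ b i}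

/-- The relative interior of a set: interior relative to its affine span. -/
def relInterior (S : Set H) : Set H :=
  {v | v ∈ S ∧ ∃ ε > (0:ℝ), ∀ y ∈ (affineSpan ℝ S : Set H), dist y v < ε → y ∈ S}

/-- Inner semicontinuity at `xb` of a set-valued map restricted to `S`. -/
def InnerSemicontinuousOnAt (T : H → Set H') (S : Set H) (xb : H) : Prop :=
  ∀ xs : ℕ → H, (∀ i, xs i ∈ S) → Tendsto xs atTop (𝓝 xb) →
    ∀ w ∈ T xb, ∃ ws : ℕ → H', (∀ i, ws i ∈ T (xs i)) ∧ Tendsto ws atTop (𝓝 w)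

/-- `M` is a `C²` submanifold of the ambient space around the point `xb`. -/
def IsC2SubmanifoldAround (M : Set H) (xb : H) : Prop :=
  ∃ (m : ℕ) (F : H → EuclideanSpace ℝ (Fin m)) (U : Set H), IsOpen U ∧ xb ∈ U ∧
    ContDiffOn ℝ 2 F U ∧ Function.Surjective (fderiv ℝ F xb) ∧
    M ∩ U = {x ∈ U | F x = 0}

/-- `Q` is partly smooth with respect to the manifold `M` at `xb` for `vb`. -/
def PartlySmoothAt (Q M : Set H) (xb vb : H) : Prop :=
  ProxRegularAt Q xb vb ∧
  (Submodule.span ℝ (frechetNormalCone Q xb) : Set H) = limitingNormalCone M xb ∧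
  ∃ V ∈ 𝓝 vb, InnerSemicontinuousOnAt (fun x => V ∩ limitingNormalCone Q x) M xb

/-- `ℝⁿ × ℝ` with the Euclidean (ℓ²) structure, hosting epigraphs. -/
abbrev PairL2 (H : Type*) [NormedAddCommGroup H] : Type _ := WithLp 2 (H × ℝ)

/-- Build a point of `PairL2 H` from its components. -/
def pmk (x : H) (r : ℝ) : PairL2 H := (WithLp.equiv 2 (H × ℝ)).symm (x, r)

/-- The epigraph of an extended-real-valued function. -/
def epigraph (f : H → EReal) : Set (PairL2 H) :=
  {p | f ((WithLp.equiv 2 (H × ℝ)) p).1 ≤ (((WithLp.equiv 2 (H × ℝ)) p).2 : EReal)}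

/-- The limiting subdifferential. -/
def limSubdiff (f : H → EReal) (x : H) : Set H :=
  {v | ∃ r : ℝ, f x = (r : EReal) ∧
      pmk v (-1) ∈ limitingNormalCone (epigraph f) (pmk x r)}

/-- The horizon subdifferential. -/
def horizonSubdiff (f : H → EReal) (x : H) : Set H :=
  {v | ∃ r : ℝ, f x = (r : EReal) ∧
      pmk v 0 ∈ limitingNormalCone (epigraph f) (pmk x r)}

/-- The proximal subdifferential. -/
def proxSubdiff (f : H → EReal) (x : H) : Set H :=
  {v | ∃ r : ℝ, f x = (r : EReal) ∧
      pmk v (-1) ∈ proxNormalCone (epigraph f) (pmk x r)}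

/-- A function is Clarke regular at `x` if its epigraph is Clarke regular at `(x, f x)`. -/
def ClarkeRegularFn (f : H → EReal) (x : H) : Prop :=
  ∃ r : ℝ, f x = (r : EReal) ∧ ClarkeRegularAt (epigraph f) (pmk x r)

/-- `M` is identifiable at `xb` for `vb` relative to the function `f` with
subdifferential mapping `D`: for every sequence `(xᵢ, f xᵢ, vᵢ) → (xb, f xb, vb)`
with `vᵢ ∈ D xᵢ`, the points `xᵢ` lie in `M` for all large `i`. -/
def IdentifiableFn (f : H → EReal) (D : H → Set H) (M : Set H) (xb vb : H) : Prop :=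
  ∀ xs vs : ℕ → H, Tendsto xs atTop (𝓝 xb) →
    Tendsto (fun i => f (xs i)) atTop (𝓝 (f xb)) →
    Tendsto vs atTop (𝓝 vb) → (∀ i, vs i ∈ D (xs i)) →
    ∀ᶠ i in atTop, xs i ∈ M

/-- `M` is a locally minimal identifiable set relative to `f` (with subdifferential `D`). -/
def LocallyMinimalIdentifiableFn (f : H → EReal) (D : H → Set H) (M : Set H)
    (xb vb : H) : Prop :=
  IdentifiableFn f D M xb vb ∧ ∀ M' : Set H, IdentifiableFn f D M' xb vb → LocallyIncl M M' xb

/-- The subdifferential of convex analysis for an extended-real-valued function. -/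
def convexSubdiff (f : H → EReal) (x : H) : Set H :=
  {v | ∃ r : ℝ, f x = (r : EReal) ∧ ∀ y : H, ((r + ⟪v, y - x⟫ : ℝ) : EReal) ≤ f y}

/-- Convexity for an extended-real-valued function. -/
def ERealConvexOn (f : H → EReal) : Prop :=
  ∀ x y : H, ∀ a b : ℝ, 0 ≤ a → 0 ≤ b → a + b = 1 →
    f (a • x + b • y) ≤ (a : EReal) * f x + (b : EReal) * f y

/-- A piecewise linear-quadratic function: its domain is the union of finitely many
convex polyhedra, on each of which it agrees with a polynomial of degree at most 2. -/
def IsPiecewiseLinearQuadratic (f : H → EReal) : Prop :=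
  ∃ (k : ℕ) (C : Fin k → Set H), (∀ i, IsPolyhedron (C i)) ∧
    ({x | f x ≠ ⊤} = ⋃ i, C i) ∧
    ∀ i, ∃ (B : H →ₗ[ℝ] H →ₗ[ℝ] ℝ) (l : H →ₗ[ℝ] ℝ) (c : ℝ),
      ∀ x ∈ C i, f x = ((B x x + l x + c : ℝ) : EReal)


/-- Outer semicontinuity of a set-valued mapping (at every point). -/
def OuterSemicontinuousSV (G : H → Set H') : Prop :=
  ∀ (x : H) (v : H') (xs : ℕ → H) (vs : ℕ → H'),
    Tendsto xs atTop (𝓝 x) → Tendsto vs atTop (𝓝 v) →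
    (∀ i, vs i ∈ G (xs i)) → v ∈ G x

end Defs

/-!
Clarke regularity makes `N := N_Q(xb)` the convex cone `N̂_Q(xb)`, so the critical cone is the
normal cone of convex analysis to `N` at `vb`, a closed convex cone `K`.

`T_M(xb) ⊆ K`: a tangent `w` of `M ⊆ Q` is polar to `N`, and `⟪vb, w⟫ ≥ 0` because `-vb` is a
Fréchet normal to `M`. Indeed minimality makes every point of `M` near `xb` carry a normal of `Q`
close to `vb`; identifiability turns it into a normal of `M`, and prox-regularity of `M` bounds
`⟪v, xb - x⟫` by `r ‖x - xb‖²`.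

`K ⊆ cl conv T_M(xb)`: by separation it suffices that `vb + s z ∈ N` for some `s > 0` whenever
`z` is polar to `T_M(xb)`. Project `xb + t u`, `u = vb + s z`, onto `Q` as `t ↓ 0`: the rescaled
displacements converge to some `d` with `‖u - d‖ ≤ ‖u‖`, and the residuals are Fréchet normals
converging to `u - d`. For small `s` this limit is close to `vb`, so identifiability puts the
projections in `M` and `d ∈ T_M(xb)`. Then `‖d‖² ≤ 2 ⟪u, d⟫ = 2 ⟪vb, d⟫ + 2 s ⟪z, d⟫ ≤ 0`, so
`d = 0` and `u ∈ N`.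
-/

section NormalCones

variable {H : Type*} [NormedAddCommGroup H] [InnerProductSpace ℝ H]

theorem nonpos_of_forall_pos_le_mul {a b : ℝ} (h : ∀ ε > 0, a ≤ ε * b) : a ≤ 0 := by
  have hlim : Tendsto (fun ε : ℝ => ε * b) (𝓝[>] 0) (𝓝 0) := by
    simpa using ((continuous_mul_const b).tendsto 0).mono_left nhdsWithin_le_nhds
  exact ge_of_tendsto hlim (eventually_nhdsWithin_of_forall h)

theorem inner_sub_le_of_dist_le {p x y : H} (h : dist p x ≤ dist p y) :
    ⟪p - x, y - x⟫ ≤ ‖y - x‖ ^ 2 / 2 := by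
  have hsq : ‖p - x‖ ^ 2 ≤ ‖(p - x) - (y - x)‖ ^ 2 := by
    rw [dist_eq_norm, dist_eq_norm] at h
    rw [sub_sub_sub_cancel_right]
    gcongr
  linarith [norm_sub_sq_real (p - x) (y - x)]

theorem frechetNormalCone_subset_limitingNormalCone (Q : Set H) (x : H) :
    frechetNormalCone Q x ⊆ limitingNormalCone Q x := fun v hv =>
  ⟨fun _ => x, fun _ => v, fun _ => hv, tendsto_const_nhds, tendsto_const_nhds⟩

theorem mem_limitingNormalCone_of_eventually {Q : Set H} {x v : H} {xs vs : ℕ → H}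
    (hvs : ∀ᶠ i in atTop, vs i ∈ frechetNormalCone Q (xs i))
    (hxs : Tendsto xs atTop (𝓝 x)) (hv : Tendsto vs atTop (𝓝 v)) :
    v ∈ limitingNormalCone Q x := by
  obtain ⟨I, hI⟩ := eventually_atTop.1 hvs
  exact ⟨fun i => xs (i + I), fun i => vs (i + I), fun i => hI _ (Nat.le_add_left I i),
    (tendsto_add_atTop_iff_nat I).2 hxs, (tendsto_add_atTop_iff_nat I).2 hv⟩

theorem frechetNormalCone_anti {M Q : Set H} (hMQ : M ⊆ Q) {x : H} (hx : x ∈ M) :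
    frechetNormalCone Q x ⊆ frechetNormalCone M x := fun _ hv =>
  ⟨hx, fun ε hε => (hv.2 ε hε).imp fun _ ⟨hδ, h⟩ => ⟨hδ, fun y hy => h y (hMQ hy)⟩⟩

theorem smul_mem_frechetNormalCone {Q : Set H} {x v : H} {c : ℝ} (hc : 0 < c)
    (hv : v ∈ frechetNormalCone Q x) : c • v ∈ frechetNormalCone Q x := by
  refine ⟨hv.1, fun ε hε => ?_⟩
  obtain ⟨δ, hδ, h⟩ := hv.2 (ε / c) (by positivity)
  refine ⟨δ, hδ, fun y hy hyx => ?_⟩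
  calc ⟪c • v, y - x⟫ = c * ⟪v, y - x⟫ := real_inner_smul_left _ _ _
    _ ≤ c * (ε / c * ‖y - x‖) := by gcongr; exact h y hy hyx
    _ = ε * ‖y - x‖ := by field_simp

theorem convex_frechetNormalCone (Q : Set H) (x : H) : Convex ℝ (frechetNormalCone Q x) := by
  intro v₁ h₁ v₂ h₂ a b ha hb hab
  refine ⟨h₁.1, fun ε hε => ?_⟩
  obtain ⟨δ₁, hδ₁, g₁⟩ := h₁.2 ε hε
  obtain ⟨δ₂, hδ₂, g₂⟩ := h₂.2 ε hε
  refine ⟨min δ₁ δ₂, lt_min hδ₁ hδ₂, fun y hy hyx => ?_⟩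
  have e₁ := g₁ y hy (hyx.trans_le (min_le_left _ _))
  have e₂ := g₂ y hy (hyx.trans_le (min_le_right _ _))
  calc ⟪a • v₁ + b • v₂, y - x⟫ = a * ⟪v₁, y - x⟫ + b * ⟪v₂, y - x⟫ := by
        rw [inner_add_left, real_inner_smul_left, real_inner_smul_left]
    _ ≤ a * (ε * ‖y - x‖) + b * (ε * ‖y - x‖) := by gcongr
    _ = ε * ‖y - x‖ := by rw [← add_mul, hab, one_mul]

theorem sub_mem_frechetNormalCone_of_forall_dist_le {Q : Set H} {p y : H} {δ : ℝ}
    (hy : y ∈ Q) (hδ : 0 < δ) (hmin : ∀ y' ∈ Q, dist y' y < δ → dist p y ≤ dist p y') :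
    p - y ∈ frechetNormalCone Q y := by
  refine ⟨hy, fun ε hε => ⟨min δ (2 * ε), lt_min hδ (by positivity), fun y' hy' hyy' => ?_⟩⟩
  have hsmall : ‖y' - y‖ ≤ 2 * ε := by
    rw [← dist_eq_norm]; exact (hyy'.trans_le (min_le_right _ _)).le
  calc ⟪p - y, y' - y⟫ ≤ ‖y' - y‖ ^ 2 / 2 :=
        inner_sub_le_of_dist_le (hmin y' hy' (hyy'.trans_le (min_le_left _ _)))
    _ ≤ ε * ‖y' - y‖ := by nlinarith [norm_nonneg (y' - y)]

end NormalCones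

section TangentCone

variable {H : Type*} [NormedAddCommGroup H] [InnerProductSpace ℝ H]

theorem mem_tangentConeB_of_eventually {M : Set H} {xb w : H} {xs : ℕ → H} {ts : ℕ → ℝ}
    (hxs : ∀ᶠ i in atTop, xs i ∈ M) (hts : ∀ i, 0 < ts i) (hts0 : Tendsto ts atTop (𝓝 0))
    (hx : Tendsto xs atTop (𝓝 xb))
    (hw : Tendsto (fun i => (ts i)⁻¹ • (xs i - xb)) atTop (𝓝 w)) :
    w ∈ tangentConeB M xb := by
  obtain ⟨I, hI⟩ := eventually_atTop.1 hxs
  exact ⟨fun i => xs (i + I), fun i => ts (i + I), fun i => hI _ (Nat.le_add_left I i),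
    fun i => hts _, (tendsto_add_atTop_iff_nat I).2 hts0, (tendsto_add_atTop_iff_nat I).2 hx,
    (tendsto_add_atTop_iff_nat I).2 hw⟩

theorem zero_mem_tangentConeB {M : Set H} {xb : H} (hxb : xb ∈ M) :
    (0 : H) ∈ tangentConeB M xb := by
  refine ⟨fun _ => xb, fun i => 1 / ((i : ℝ) + 1), fun _ => hxb, fun i => by positivity,
    tendsto_one_div_add_atTop_nhds_zero_nat, tendsto_const_nhds, ?_⟩
  simp only [sub_self, smul_zero, tendsto_const_nhds]

theorem smul_mem_tangentConeB {M : Set H} {xb w : H} {c : ℝ} (hc : 0 < c)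
    (hw : w ∈ tangentConeB M xb) : c • w ∈ tangentConeB M xb := by
  obtain ⟨xs, ts, hxs, hts, hts0, hx, hlim⟩ := hw
  refine ⟨xs, fun i => c⁻¹ * ts i, hxs, fun i => by have := hts i; positivity,
    by simpa using hts0.const_mul c⁻¹, hx, ?_⟩
  simp only [mul_inv, inv_inv, mul_smul]
  exact hlim.const_smul c

theorem inner_nonpos_of_mem_frechetNormalCone {Q : Set H} {xb v w : H}
    (hv : v ∈ frechetNormalCone Q xb) (hw : w ∈ tangentConeB Q xb) : ⟪v, w⟫ ≤ 0 := by
  obtain ⟨xs, ts, hxs, hts, -, hx, hlim⟩ := hw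
  refine nonpos_of_forall_pos_le_mul (b := ‖w‖) fun ε hε => ?_
  obtain ⟨δ, hδ, hQ⟩ := hv.2 ε hε
  have hev : ∀ᶠ i in atTop,
      ⟪v, (ts i)⁻¹ • (xs i - xb)⟫ ≤ ε * ‖(ts i)⁻¹ • (xs i - xb)‖ := by
    filter_upwards [hx (ball_mem_nhds xb hδ)] with i hi
    have hti : 0 ≤ (ts i)⁻¹ := inv_nonneg.2 (hts i).le
    rw [real_inner_smul_right, norm_smul, Real.norm_of_nonneg hti, mul_left_comm]
    exact mul_le_mul_of_nonneg_left (hQ (xs i) (hxs i) (mem_ball.1 hi)) hti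
  exact le_of_tendsto_of_tendsto (tendsto_const_nhds.inner hlim) (hlim.norm.const_mul ε) hev

end TangentCone

section ConvexAnalysis

variable {H : Type*} [NormedAddCommGroup H] [InnerProductSpace ℝ H]

theorem isClosed_convNormalCone (C : Set H) (x : H) : IsClosed (convNormalCone C x) := by
  simp only [convNormalCone, ofPred_forall]
  exact isClosed_biInter fun y _ =>
    isClosed_le (continuous_id.inner continuous_const) continuous_const

theorem convex_convNormalCone (C : Set H) (x : H) : Convex ℝ (convNormalCone C x) := by
  intro v₁ h₁ v₂ h₂ a b ha hb _ y hy
  rw [inner_add_left, real_inner_smul_left, real_inner_smul_left]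
  nlinarith [mul_nonpos_of_nonneg_of_nonpos ha (h₁ y hy),
    mul_nonpos_of_nonneg_of_nonpos hb (h₂ y hy)]

theorem convNormalCone_subset_frechetNormalCone {C : Set H} {x : H} (hx : x ∈ C) :
    convNormalCone C x ⊆ frechetNormalCone C x := fun _ hv =>
  ⟨hx, fun _ hε => ⟨1, one_pos, fun y hy _ =>
    (hv y hy).trans (mul_nonneg hε.le (norm_nonneg _))⟩⟩

theorem frechetNormalCone_subset_convNormalCone {C : Set H} (hC : Convex ℝ C) (x : H) :
    frechetNormalCone C x ⊆ convNormalCone C x := by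
  intro v hv y hy
  refine nonpos_of_forall_pos_le_mul (b := ‖y - x‖) fun ε hε => ?_
  obtain ⟨δ, hδ, h⟩ := hv.2 ε hε
  -- Test the Fréchet inequality along the segment from `x` towards `y`, which stays in `C`.
  have hseg : Tendsto (fun t : ℝ => x + t • (y - x)) (𝓝[>] 0) (𝓝 x) := by
    have hcont : Continuous fun t : ℝ => x + t • (y - x) := by fun_prop
    simpa using (hcont.tendsto 0).mono_left nhdsWithin_le_nhds
  obtain ⟨t, ⟨ht0, ht1⟩, hclose⟩ :=
    Filter.nonempty_of_mem (inter_mem (Ioc_mem_nhdsGT one_pos) (hseg (ball_mem_nhds x hδ)))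
  have hmem : x + t • (y - x) ∈ C := by
    convert hC hv.1 hy (sub_nonneg.2 ht1) ht0.le (sub_add_cancel 1 t) using 1
    rw [smul_sub, sub_smul, one_smul]; abel
  have key := h _ hmem (mem_ball.1 hclose)
  rw [add_sub_cancel_left, real_inner_smul_right, norm_smul, Real.norm_of_nonneg ht0.le,
    mul_left_comm] at key
  exact le_of_mul_le_mul_left key ht0

theorem limitingNormalCone_eq_convNormalCone {C : Set H} (hC : Convex ℝ C) {x : H}
    (hx : x ∈ C) : limitingNormalCone C x = convNormalCone C x := by
  refine Subset.antisymm ?_ fun v hv => frechetNormalCone_subset_limitingNormalCone C x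
    (convNormalCone_subset_frechetNormalCone hx hv)
  rintro v ⟨xs, vs, hvs, hxs, hv⟩ y hy
  exact le_of_tendsto (hv.inner (tendsto_const_nhds.sub hxs)) <| Eventually.of_forall
    fun i => frechetNormalCone_subset_convNormalCone hC (xs i) (hvs i) y hy

theorem mem_closure_convexHull_of_forall_inner_nonpos [CompleteSpace H] {T : Set H}
    (h0 : (0 : H) ∈ T) (hT : ∀ c : ℝ, 0 < c → ∀ t ∈ T, c • t ∈ T) {w : H}
    (hw : ∀ z : H, (∀ t ∈ T, ⟪z, t⟫ ≤ 0) → ⟪z, w⟫ ≤ 0) :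
    w ∈ closure (convexHull ℝ T) := by
  by_contra hnot
  obtain ⟨f, a, hfa, haw⟩ := geometric_hahn_banach_closed_point
    (convex_convexHull ℝ T).closure isClosed_closure hnot
  set z := (InnerProductSpace.toDual ℝ H).symm f
  have hz : ∀ x, ⟪z, x⟫ = f x := fun x => InnerProductSpace.toDual_symm_apply
  have hmem : ∀ t ∈ T, f t < a := fun t ht => hfa t (subset_closure (subset_convexHull ℝ T ht))
  have ha : 0 < a := by simpa using hmem 0 h0
  -- `T` is a cone, so `f < a` on `T` forces `f ≤ 0` on `T`.
  have hpolar : ∀ t ∈ T, ⟪z, t⟫ ≤ 0 := by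
    intro t ht
    by_contra! hpos
    have := hmem _ (hT (a / ⟪z, t⟫) (div_pos ha hpos) t ht)
    rw [← hz, real_inner_smul_right, div_mul_cancel₀ _ hpos.ne'] at this
    exact lt_irrefl a this
  linarith [hw z hpolar, hz w]

end ConvexAnalysis

section Identifiability

variable {H : Type*} [NormedAddCommGroup H] [InnerProductSpace ℝ H] {Q M : Set H} {xb vb : H}

theorem IdentifiableIn.exists_radius (hM : IdentifiableIn Q M xb vb) :
    ∃ ρ > 0, ∀ x v, dist x xb < ρ → dist v vb < ρ → x ∈ Q →
      v ∈ limitingNormalCone Q x → x ∈ M := by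
  obtain ⟨W, hW, hWM⟩ := hM
  obtain ⟨ρ, hρ, hball⟩ := Metric.mem_nhds_iff.1 hW
  exact ⟨ρ, hρ, fun x v hx hv => hWM (x, v) (hball (by
    rw [mem_ball, Prod.dist_eq]; exact max_lt hx hv))⟩

theorem IdentifiableIn.limitingNormalCone_subset (hM : IdentifiableIn Q M xb vb)
    (hMQ : M ⊆ Q) : ∃ ρ > 0, ∀ x v, dist x xb < ρ → dist v vb < ρ →
      v ∈ limitingNormalCone Q x → v ∈ limitingNormalCone M x := by
  obtain ⟨ρ, hρ, hident⟩ := hM.exists_radius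
  refine ⟨ρ, hρ, fun x v hx hv ⟨xs, vs, hvs, hxs, hvs'⟩ => ?_⟩
  refine mem_limitingNormalCone_of_eventually ?_ hxs hvs'
  filter_upwards [(hxs.dist tendsto_const_nhds).eventually_lt_const hx,
    (hvs'.dist tendsto_const_nhds).eventually_lt_const hv] with i hxi hvi
  exact frechetNormalCone_anti hMQ (hident _ _ hxi hvi (hvs i).1
    (frechetNormalCone_subset_limitingNormalCone Q _ (hvs i))) (hvs i)

/-- Minimality of `M` forces normals close to `vb` at all points of `M` near `xb`, since the
set of points carrying such normals is itself identifiable. -/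
theorem LocallyMinimalIdentifiableIn.eventually_exists_normal_near
    (hM : LocallyMinimalIdentifiableIn Q M xb vb) {δ : ℝ} (hδ : 0 < δ) :
    ∀ᶠ x in 𝓝 xb, x ∈ M → ∃ v ∈ limitingNormalCone Q x, dist v vb < δ := by
  have hid : IdentifiableIn Q {x | ∃ v ∈ limitingNormalCone Q x, dist v vb < δ} xb vb :=
    ⟨univ ×ˢ ball vb δ, prod_mem_nhds univ_mem (ball_mem_nhds vb hδ),
      fun p hp _ hv => ⟨p.2, hv, hp.2⟩⟩
  obtain ⟨U, hU, hMU⟩ := hM.2 _ hid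
  filter_upwards [hU] with x hxU hxM
  exact (hMU ⟨hxM, hxU⟩).1

theorem ProxRegularAt.exists_inner_le (hM : ProxRegularAt M xb vb) :
    ∃ ε > 0, ∃ r > 0, ∀ x ∈ M, ∀ v ∈ limitingNormalCone M x, dist x xb < ε → dist v vb < ε →
      ∀ y ∈ M, dist y xb ≤ ε → ⟪v, y - x⟫ ≤ r * ‖y - x‖ ^ 2 := by
  obtain ⟨-, ε, hε, r, hr, hnear⟩ := hM
  refine ⟨ε, hε, r / 2, by positivity, fun x hx v hv hxε hvε y hy hyε => ?_⟩
  have hdist : dist (x + r⁻¹ • v) x ≤ dist (x + r⁻¹ • v) y := by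
    obtain ⟨-, hlt⟩ := hnear x hx v hv hxε hvε
    rcases eq_or_ne y x with rfl | hyx
    · exact le_rfl
    · exact (hlt y ⟨hy, mem_closedBall.2 hyε⟩ hyx).le
  have key := inner_sub_le_of_dist_le hdist
  rw [add_sub_cancel_left, real_inner_smul_left] at key
  calc ⟪v, y - x⟫ = r * (r⁻¹ * ⟪v, y - x⟫) := by field_simp
    _ ≤ r * (‖y - x‖ ^ 2 / 2) := by gcongr
    _ = r / 2 * ‖y - x‖ ^ 2 := by ring

theorem neg_mem_frechetNormalCone_of_proxRegularAt (hMQ : M ⊆ Q) (hxb : xb ∈ M)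
    (hmin : LocallyMinimalIdentifiableIn Q M xb vb) (hprox : ProxRegularAt M xb vb) :
    -vb ∈ frechetNormalCone M xb := by
  obtain ⟨ρ, hρ, hNM⟩ := hmin.1.limitingNormalCone_subset hMQ
  obtain ⟨ε, hε, r, hr, hineq⟩ := hprox.exists_inner_le
  refine ⟨hxb, fun η hη => ?_⟩
  set δ := min (min ρ ε) (η / 2)
  have hδ : 0 < δ := lt_min (lt_min hρ hε) (by positivity)
  obtain ⟨δ', hδ', hnear⟩ := Metric.eventually_nhds_iff.1
    ((hmin.eventually_exists_normal_near hδ).and (ball_mem_nhds xb (show 0 < min δ (η / (2 * r))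
      from lt_min hδ (by positivity))))
  refine ⟨δ', hδ', fun x hxM hx => ?_⟩
  obtain ⟨⟨v, hvQ, hvδ⟩, hxball⟩ := (hnear hx).imp_left (· hxM)
  have hxδ : dist x xb < δ := (mem_ball.1 hxball).trans_le (min_le_left _ _)
  have hxr : r * ‖x - xb‖ ≤ η / 2 := by
    have : ‖x - xb‖ < η / (2 * r) := by
      rw [← dist_eq_norm]; exact (mem_ball.1 hxball).trans_le (min_le_right _ _)
    rw [lt_div_iff₀ (by positivity)] at this; linarith
  have hδρ : δ ≤ ρ := (min_le_left _ _).trans (min_le_left _ _)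
  have hδε : δ ≤ ε := (min_le_left _ _).trans (min_le_right _ _)
  have hvM := hNM x v (hxδ.trans_le hδρ) (hvδ.trans_le hδρ) hvQ
  have hxprox := hineq x hxM v hvM (hxδ.trans_le hδε)
    (hvδ.trans_le hδε) xb hxb (by rw [dist_self]; exact hε.le)
  have hvvb : ⟪v - vb, x - xb⟫ ≤ η / 2 * ‖x - xb‖ :=
    (real_inner_le_norm _ _).trans (mul_le_mul_of_nonneg_right
      ((dist_eq_norm v vb ▸ hvδ).le.trans (min_le_right _ _)) (norm_nonneg _))
  have hsplit : ⟪-vb, x - xb⟫ = ⟪v - vb, x - xb⟫ + ⟪v, xb - x⟫ := by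
    rw [← neg_sub x xb, inner_neg_right, inner_sub_left, inner_neg_left]; ring
  rw [norm_sub_rev xb x] at hxprox
  nlinarith [norm_nonneg (x - xb)]

theorem tangentConeB_subset_convNormalCone (hMQ : M ⊆ Q) (hxb : xb ∈ M)
    (hvb : -vb ∈ frechetNormalCone M xb) :
    tangentConeB M xb ⊆ convNormalCone (frechetNormalCone Q xb) vb := by
  intro w hw y hy
  have hyw := inner_nonpos_of_mem_frechetNormalCone (frechetNormalCone_anti hMQ hxb hy) hw
  have hvbw := inner_nonpos_of_mem_frechetNormalCone hvb hw
  rw [inner_neg_left] at hvbw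
  rw [inner_sub_right, real_inner_comm y w, real_inner_comm vb w]
  linarith

end Identifiability

section Projection

variable {H : Type*} [NormedAddCommGroup H] [InnerProductSpace ℝ H] [ProperSpace H]
  {Q M : Set H} {xb vb : H}

theorem LocallyClosedAt.exists_nearest_frechetNormal (hQ : LocallyClosedAt Q xb)
    (hxb : xb ∈ Q) : ∃ ε > 0, ∀ p, dist p xb < ε →
      ∃ y ∈ Q, dist p y ≤ dist p xb ∧ p - y ∈ frechetNormalCone Q y := by
  obtain ⟨ε, hε, hcl⟩ := hQ
  refine ⟨ε / 2, by positivity, fun p hp => ?_⟩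
  have hxbS : xb ∈ Q ∩ closedBall xb ε := ⟨hxb, mem_closedBall_self hε.le⟩
  obtain ⟨y, ⟨hyQ, -⟩, hymin⟩ := ((isCompact_closedBall xb ε).of_isClosed_subset hcl
    inter_subset_right).exists_isMinOn ⟨xb, hxbS⟩ (continuous_const.dist continuous_id).continuousOn
  have hpy : dist p y ≤ dist p xb := hymin hxbS
  -- The nearest point lies in the open ball, so it is also a nearest point of `Q` locally.
  have hyxb : dist y xb < ε := by
    linarith [dist_triangle y p xb, dist_comm y p]
  refine ⟨y, hyQ, hpy, sub_mem_frechetNormalCone_of_forall_dist_le hyQ (sub_pos.2 hyxb)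
    fun y' hy' hyy' => hymin ⟨hy', mem_closedBall.2 ?_⟩⟩
  linarith [dist_triangle y' y xb]

/-- Obtained by projecting `xb + t u` onto `Q` as `t ↓ 0`. -/
theorem LocallyClosedAt.exists_tangent_seq (hQ : LocallyClosedAt Q xb) (hxb : xb ∈ Q) (u : H) :
    ∃ (d : H) (ys : ℕ → H) (ts : ℕ → ℝ), ‖u - d‖ ≤ ‖u‖ ∧ (∀ i, 0 < ts i) ∧
      Tendsto ts atTop (𝓝 0) ∧ Tendsto ys atTop (𝓝 xb) ∧
      Tendsto (fun i => (ts i)⁻¹ • (ys i - xb)) atTop (𝓝 d) ∧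
      ∀ i, u - (ts i)⁻¹ • (ys i - xb) ∈ frechetNormalCone Q (ys i) := by
  obtain ⟨ε, hε, hproj⟩ := hQ.exists_nearest_frechetNormal hxb
  obtain ⟨τ, -, hτmem, hτ0⟩ :=
    exists_seq_strictAnti_tendsto' (show (0 : ℝ) < ε / (‖u‖ + 1) by positivity)
  have hτ : ∀ i, 0 < τ i := fun i => (hτmem i).1
  have hpdist : ∀ i, dist (xb + τ i • u) xb = τ i * ‖u‖ := fun i => by
    rw [dist_eq_norm, add_sub_cancel_left, norm_smul, Real.norm_of_nonneg (hτ i).le]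
  have hp : ∀ i, dist (xb + τ i • u) xb < ε := fun i => by
    have := (hτmem i).2
    rw [lt_div_iff₀ (by positivity)] at this
    nlinarith [hpdist i, norm_nonneg u, hτ i]
  choose y hyQ hyd hyN using fun i => hproj _ (hp i)
  set h : ℕ → H := fun i => (τ i)⁻¹ • (y i - xb)
  have hres : ∀ i, u - h i = (τ i)⁻¹ • (xb + τ i • u - y i) := fun i => by
    rw [show xb + τ i • u - y i = τ i • u - (y i - xb) by abel, smul_sub,
      inv_smul_smul₀ (hτ i).ne']
  have hball : ∀ i, h i ∈ closedBall u ‖u‖ := fun i => by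
    rw [mem_closedBall, dist_comm, dist_eq_norm, hres, norm_smul,
      Real.norm_of_nonneg (inv_nonneg.2 (hτ i).le), ← dist_eq_norm, inv_mul_le_iff₀ (hτ i)]
    exact (hyd i).trans (hpdist i).le
  obtain ⟨d, hd, φ, hφ, hlim⟩ := tendsto_subseq_of_bounded isBounded_closedBall hball
  rw [isClosed_closedBall.closure_eq, mem_closedBall, dist_comm, dist_eq_norm] at hd
  have hτφ : Tendsto (τ ∘ φ) atTop (𝓝 0) := hτ0.comp hφ.tendsto_atTop
  have hy : ∀ i, y i = xb + τ i • h i := fun i => by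
    simp only [h, smul_inv_smul₀ (hτ i).ne', add_sub_cancel]
  refine ⟨d, y ∘ φ, τ ∘ φ, hd, fun i => hτ _, hτφ, ?_, hlim, fun i => ?_⟩
  · have := tendsto_const_nhds (x := xb) |>.add (hτφ.smul hlim)
    rw [zero_smul, add_zero] at this
    exact this.congr fun i => (hy (φ i)).symm
  · exact hres (φ i) ▸ smul_mem_frechetNormalCone (inv_pos.2 (hτ _)) (hyN (φ i))

theorem exists_add_smul_mem_limitingNormalCone (hQ : LocallyClosedAt Q xb)
    (hvb : vb ∈ frechetNormalCone Q xb) (hM : IdentifiableIn Q M xb vb) {z : H}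
    (hz : ∀ t ∈ tangentConeB M xb, ⟪z, t⟫ ≤ 0) :
    ∃ s : ℝ, 0 < s ∧ vb + s • z ∈ limitingNormalCone Q xb := by
  obtain ⟨ρ, hρ, hident⟩ := hM.exists_radius
  set s := ρ / (4 * (‖z‖ + 1))
  have hs : 0 < s := by positivity
  have hsz : 3 * (s * ‖z‖) < ρ := by
    have hρs : s * (4 * (‖z‖ + 1)) = ρ := div_mul_cancel₀ ρ (by positivity)
    nlinarith
  obtain ⟨d, ys, ts, hud, hts, hts0, hys, hlim, hN⟩ := hQ.exists_tangent_seq hvb.1 (vb + s • z)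
  have hlimN : Tendsto (fun i => vb + s • z - (ts i)⁻¹ • (ys i - xb)) atTop
      (𝓝 (vb + s • z - d)) := tendsto_const_nhds.sub hlim
  have hvbd : ⟪vb, d⟫ ≤ 0 := inner_nonpos_of_mem_frechetNormalCone hvb
    ⟨ys, ts, fun i => (hN i).1, hts, hts0, hys, hlim⟩
  have hd2 : ‖d‖ ^ 2 ≤ 2 * (⟪vb, d⟫ + s * ⟪z, d⟫) := by
    have hsq : ‖vb + s • z - d‖ ^ 2 ≤ ‖vb + s • z‖ ^ 2 := by gcongr
    rw [norm_sub_sq_real, inner_add_left, real_inner_smul_left] at hsq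
    linarith
  have hdM : d ∈ tangentConeB M xb := by
    have hd : ‖d‖ ≤ 2 * (s * ‖z‖) := by
      have hdd : ‖d‖ * ‖d‖ ≤ 2 * (s * ‖z‖) * ‖d‖ := by
        nlinarith [mul_le_mul_of_nonneg_left (real_inner_le_norm z d) hs.le]
      by_contra! hlt
      nlinarith [mul_nonneg hs.le (norm_nonneg z)]
    have hnear : dist (vb + s • z - d) vb < ρ := by
      rw [dist_eq_norm, show vb + s • z - d - vb = s • z - d by abel]
      calc ‖s • z - d‖ ≤ s * ‖z‖ + ‖d‖ := by
            simpa [norm_smul, abs_of_pos hs] using norm_sub_le (s • z) d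
        _ < ρ := by linarith
    refine mem_tangentConeB_of_eventually ?_ hts hts0 hys hlim
    filter_upwards [(hys.dist tendsto_const_nhds).eventually_lt_const (dist_self xb ▸ hρ),
      (hlimN.dist tendsto_const_nhds).eventually_lt_const hnear] with i hi hvi
    exact hident _ _ hi hvi (hN i).1 (frechetNormalCone_subset_limitingNormalCone Q _ (hN i))
  have hd0 : d = 0 := by
    rw [← norm_eq_zero]
    nlinarith [hz d hdM, norm_nonneg d]
  refine ⟨s, hs, ?_⟩
  simpa [hd0] using mem_limitingNormalCone_of_eventually (Eventually.of_forall hN) hys hlimN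

end Projection

theorem statement15_general {n : ℕ} (Q : Set (Euc n)) (xb : Euc n)
    (hreg : ClarkeRegularAt Q xb) (vb : Euc n) (hvb : vb ∈ limitingNormalCone Q xb)
    (M : Set (Euc n)) (hMQ : M ⊆ Q) (hxbM : xb ∈ M)
    (hmin : LocallyMinimalIdentifiableIn Q M xb vb)
    (hprox : ProxRegularAt M xb vb) :
    closure (convexHull ℝ (tangentConeB M xb)) =
      limitingNormalCone (limitingNormalCone Q xb) vb := by
  obtain ⟨hQ, hN⟩ := hreg
  rw [hN] at hvb ⊢
  rw [limitingNormalCone_eq_convNormalCone (convex_frechetNormalCone Q xb) hvb]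
  refine Subset.antisymm ?_ fun w hw => ?_
  · have hT := tangentConeB_subset_convNormalCone hMQ hxbM
      (neg_mem_frechetNormalCone_of_proxRegularAt hMQ hxbM hmin hprox)
    exact closure_minimal (convexHull_min hT (convex_convNormalCone _ _))
      (isClosed_convNormalCone _ _)
  · refine mem_closure_convexHull_of_forall_inner_nonpos (zero_mem_tangentConeB hxbM)
      (fun c hc t ht => smul_mem_tangentConeB hc ht) fun z hz => ?_
    obtain ⟨s, hs, hsN⟩ := exists_add_smul_mem_limitingNormalCone hQ hvb hmin.1 hz
    have hwz := hw _ (hN ▸ hsN)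
    rw [add_sub_cancel_left, real_inner_smul_right, real_inner_comm] at hwz
    exact nonpos_of_mul_nonpos_right hwz hs

/-- Critical cones as tangential approximations. -/
theorem statement15 {n : ℕ} (Q : Set (Euc n)) (xb : Euc n)
    (hreg : ClarkeRegularAt Q xb) (vb : Euc n) (hvb : vb ∈ limitingNormalCone Q xb)
    (M : Set (Euc n)) (hMQ : M ⊆ Q) (hxbM : xb ∈ M)
    (hmin : LocallyMinimalIdentifiableIn Q M xb vb)
    (hprox : ProxRegularAt M xb vb) (hder : SmoothlyDerivableAt M xb) :
    closure (convexHull ℝ (tangentConeB M xb)) =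
      limitingNormalCone (limitingNormalCone Q xb) vb :=
  statement15_general Q xb hreg vb hvb M hMQ hxbM hmin hprox
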